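/- Let C be a flag pure normal simplicial complex, S a nonempty set of vertices of C, and Γ=[F_0,…,F_N] a monotone conservative path towards S. Let x and y be consecutive anchors along Γ, with x coming first. If z is a vertex adjacent to y in the 1-skeleton of C and z belongs to a facet F_i of Γ anchored at x, then z belongs to every facet F_j with i ≤ j ≤ m, where F_m is the first facet of Γ anchored at y. -/

import Mathlib

/-! Common definitions: pure simplicial complexes (represented by their facet sets),
vertex-distance, links, ordered facets, vectors of distances, admissibility, and
monotone/conservative dual paths, following Adiprasito–Benedetti's combinatorial
segments. -/

open scoped Classical

noncomputable section

namespace MCP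

variable {V : Type} [DecidableEq V] [Fintype V]

/-- The vertex set of the complex whose set of facets is `C`. -/
def verts (C : Finset (Finset V)) : Finset V := C.sup id

/-- `f` is a face of the pure complex with facet set `C`. -/
def IsFace (C : Finset (Finset V)) (f : Finset V) : Prop := ∃ F ∈ C, f ⊆ F

/-- `C` is pure of dimension `d - 1`: every facet has `d` vertices. -/
def Pure (C : Finset (Finset V)) (d : ℕ) : Prop := ∀ F ∈ C, F.card = d

/-- The 1-skeleton of the complex: two vertices are joined iff they lie in a common facet. -/
def skeleton (C : Finset (Finset V)) : SimpleGraph V where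
  Adj u v := u ≠ v ∧ ∃ F ∈ C, u ∈ F ∧ v ∈ F
  symm := by
    constructor
    rintro u v ⟨h, F, hF, hu, hv⟩
    exact ⟨h.symm, F, hF, hv, hu⟩
  loopless := by constructor; rintro u ⟨h, -⟩; exact h rfl

/-- Two facets are adjacent in the dual graph iff they differ in a single vertex. -/
def AdjFacets (F G : Finset V) : Prop :=
  F ≠ G ∧ F.card = G.card ∧ (F ∩ G).card + 1 = F.card

/-- A dual path: a list of facets of `C` in which consecutive facets are adjacent. -/
def IsDualPath (C : Finset (Finset V)) (P : List (Finset V)) : Prop :=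
  (∀ F ∈ P, F ∈ C) ∧ P.Chain' AdjFacets

/-- `C` is normal: for every face `f`, any two facets containing `f` are joined by a
dual path all of whose facets contain `f`. -/
def Normal (C : Finset (Finset V)) : Prop :=
  ∀ f : Finset V, ∀ F ∈ C, ∀ G ∈ C, f ⊆ F → f ⊆ G →
    ∃ P : List (Finset V), P.head? = some F ∧ P.getLast? = some G ∧
      (∀ H ∈ P, H ∈ C ∧ f ⊆ H) ∧ P.Chain' AdjFacets

/-- The (facet set of the) link of a vertex `x` in `C`. -/
def link (C : Finset (Finset V)) (x : V) : Finset (Finset V) :=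
  (C.filter (fun F => x ∈ F)).image (fun F => F.erase x)

/-- Vertex-distance (in the 1-skeleton) between two sets of vertices, with value `⊤`
if one of the sets is empty, and with the special `0/1` convention when the complex
is `0`-dimensional. -/
def vdistSets (C : Finset (Finset V)) (S T : Finset V) : ℕ∞ :=
  if C.sup Finset.card ≤ 1 then
    (if S.Nonempty ∧ T.Nonempty then (if (S ∩ T).Nonempty then 0 else 1) else ⊤)
  else ⨅ u ∈ S, ⨅ v ∈ T, (skeleton C).edist u v

/-- The derived target set `S'` in the link of `x`, used in the recursive definitions
of the vector of distances and of admissibility. -/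
def targetSet (C : Finset (Finset V)) (x : V) (S : Finset V) : Finset V :=
  if x ∈ S then S ∩ verts (link C x)
  else (verts (link C x)).filter
    (fun w => vdistSets C {w} S + 1 = vdistSets C {x} S)

/-- The vector of distances from an ordered facet (a list of vertices) to a target set. -/
def distVector : Finset (Finset V) → List V → Finset V → List ℕ∞
  | _, [], _ => []
  | C, x :: rest, S => vdistSets C {x} S :: distVector (link C x) rest (targetSet C x S)

/-- Admissibility of an ordering of a facet with respect to a target set: the first
vertex realizes the vertex-distance from the facet to the target set, and recursively
in the link. -/
def Admissible : Finset (Finset V) → List V → Finset V → Prop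
  | _, [], _ => True
  | C, x :: rest, S =>
      vdistSets C {x} S = vdistSets C (x :: rest).toFinset S ∧
      Admissible (link C x) rest (targetSet C x S)

/-- An ordered facet of `C`: a repetition-free list of vertices forming a facet. -/
def IsOrderedFacet (C : Finset (Finset V)) (L : List V) : Prop :=
  L.Nodup ∧ L.toFinset ∈ C

/-- A dual path of ordered facets. -/
def IsOrderedDualPath (C : Finset (Finset V)) (Γ : List (List V)) : Prop :=
  (∀ L ∈ Γ, IsOrderedFacet C L) ∧
  Γ.Chain' (fun L M => AdjFacets L.toFinset M.toFinset)

/-- A path of ordered facets is monotone towards `S` if its vectors of distances are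
strictly lexicographically decreasing. -/
def MonotonePath (C : Finset (Finset V)) (S : Finset V) (Γ : List (List V)) : Prop :=
  Γ.Chain' (fun L M => List.Lex (· < ·) (distVector C M S) (distVector C L S))

/-- The index of a step: the least position at which the two orderings differ. -/
def stepIndex (L M : List V) : ℕ := sInf {k : ℕ | L[k]? ≠ M[k]?}

/-- The step from `L` to `M` is conservative towards `S`: the removed vertex is the last
vertex of `L`, and `M` is admissibly ordered with maximum index among all admissible
reorderings. -/
def ConservativeStep (C : Finset (Finset V)) (S : Finset V) (L M : List V) : Prop :=
  (∃ x, L.getLast? = some x ∧ L.toFinset \ M.toFinset = {x}) ∧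
  Admissible C M S ∧
  ∀ M' : List V, M'.Perm M → Admissible C M' S → stepIndex L M' ≤ stepIndex L M

/-- A path of ordered facets is conservative towards `S` if its first facet is
admissibly ordered and every step is conservative. -/
def ConservativePath (C : Finset (Finset V)) (S : Finset V) (Γ : List (List V)) : Prop :=
  (∀ L ∈ Γ.head?, Admissible C L S) ∧ Γ.Chain' (ConservativeStep C S)

/-- A monotone conservative dual path of ordered facets towards `S`. -/
def MonoConsPath (C : Finset (Finset V)) (S : Finset V) (Γ : List (List V)) : Prop :=
  IsOrderedDualPath C Γ ∧ MonotonePath C S Γ ∧ ConservativePath C S Γ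

/-- The path `Γ` starts at the facet `F`. -/
def StartsAt (Γ : List (List V)) (F : Finset V) : Prop :=
  ∃ L, Γ.head? = some L ∧ L.toFinset = F

/-- The path `Γ` ends at the facet `F`. -/
def EndsAt (Γ : List (List V)) (F : Finset V) : Prop :=
  ∃ L, Γ.getLast? = some L ∧ L.toFinset = F

/-- `C` is flag: every set of vertices of `C` pairwise joined by edges of `C` is a face. -/
def Flag (C : Finset (Finset V)) : Prop :=
  ∀ T : Finset V, T ⊆ verts C →
    (∀ u ∈ T, ∀ v ∈ T, u ≠ v → (skeleton C).Adj u v) → IsFace C T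

/-- A critical clique: a clique of the 1-skeleton that becomes a face after removing a
suitable vertex. -/
def CriticalClique (C : Finset (Finset V)) (T : Finset V) : Prop :=
  (∀ u ∈ T, ∀ v ∈ T, u ≠ v → (skeleton C).Adj u v) ∧ ∃ v ∈ T, IsFace C (T.erase v)

/-- `C` is `k`-banner: every critical clique with at least `k + 1` vertices is a face. -/
def Banner (C : Finset (Finset V)) (k : ℕ) : Prop :=
  ∀ T : Finset V, CriticalClique C T → k + 1 ≤ T.card → IsFace C T

/-- A pure `(d-1)`-complex is a pseudomanifold (possibly with boundary) if every
`(d-2)`-dimensional face lies in at most two facets. -/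
def Pseudomanifold (C : Finset (Finset V)) (d : ℕ) : Prop :=
  ∀ f : Finset V, f.card + 1 = d → IsFace C f → (C.filter (fun F => f ⊆ F)).card ≤ 2

/-- A pure `(d-1)`-complex is a pseudomanifold without boundary if every
`(d-2)`-dimensional face lies in exactly two facets. -/
def PseudomanifoldNoBoundary (C : Finset (Finset V)) (d : ℕ) : Prop :=
  ∀ f : Finset V, f.card + 1 = d → IsFace C f → (C.filter (fun F => f ⊆ F)).card = 2

/-- The join of two complexes (given by their facet sets, on disjoint vertex sets). -/
def join (C₁ C₂ : Finset (Finset V)) : Finset (Finset V) :=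
  (C₁ ×ˢ C₂).image (fun p => p.1 ∪ p.2)

/-- The one-point-suspension of `C` at the vertex `v`; the two new suspension vertices
are `Sum.inr false` and `Sum.inr true`. -/
def ops (C : Finset (Finset V)) (v : V) : Finset (Finset (V ⊕ Bool)) :=
  ((C.filter (fun F => v ∈ F)).image
      (fun F => ((F.erase v).image Sum.inl) ∪ {Sum.inr false, Sum.inr true}))
  ∪ ((C.filter (fun F => v ∉ F)).image (fun F => (F.image Sum.inl) ∪ {Sum.inr false}))
  ∪ ((C.filter (fun F => v ∉ F)).image (fun F => (F.image Sum.inl) ∪ {Sum.inr true}))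

/-- The degree of a vertex in the 1-skeleton of `C`. -/
def degree (C : Finset (Finset V)) (x : V) : ℕ :=
  (Finset.univ.filter fun w => (skeleton C).Adj x w).card

/-- Vertex-decomposability of a pure complex given by its facet set: either a single
simplex, or there is a vertex whose deletion stays pure of the same dimension and whose
link and deletion are both vertex-decomposable.  (The condition
`∀ F ∈ C, ∃ G ∈ C, x ∉ G ∧ F.erase x ⊆ G` expresses that the deletion of `x` is pure
of the same dimension, so that its facets are the facets of `C` avoiding `x`.) -/
inductive VertexDecomposable : Finset (Finset V) → Prop
  | simplex (F : Finset V) : VertexDecomposable {F}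
  | step (C : Finset (Finset V)) (x : V) (hx : x ∈ verts C)
      (hdelpure : ∀ F ∈ C, ∃ G ∈ C, x ∉ G ∧ F.erase x ⊆ G)
      (hlink : VertexDecomposable (link C x))
      (hdel : VertexDecomposable (C.filter (fun F => x ∉ F))) :
      VertexDecomposable C

/-- The maximum length (number of steps) of a monotone conservative path in `C`, over
all nonempty target sets of vertices of `C`. -/
def maxl (C : Finset (Finset V)) : ℕ :=
  sSup {n : ℕ | ∃ (S : Finset V) (Γ : List (List V)), S.Nonempty ∧ S ⊆ verts C ∧
    MonoConsPath C S Γ ∧ Γ.length = n + 1}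

/-- `CombSeg C Γ S x₀`: the dual path `Γ` is a combinatorial segment in `C` from its
first facet to the target set `S`, anchored at `x₀` (Adiprasito–Benedetti). -/
inductive CombSeg : Finset (Finset V) → List (Finset V) → Finset V → V → Prop
  | intersects (C : Finset (Finset V)) (F S : Finset V) (x₀ : V)
      (hF : F ∈ C) (hx : x₀ ∈ F) (hFS : (F ∩ S).Nonempty) :
      CombSeg C [F] S x₀
  | dimOne (C : Finset (Finset V)) (S : Finset V) (x₀ v : V)
      (hdim : ∀ F ∈ C, F.card = 1)
      (h₁ : {x₀} ∈ C) (h₂ : {v} ∈ C) (hx : x₀ ∉ S) (hv : v ∈ S) :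
      CombSeg C [{x₀}, {v}] S x₀
  | step (C : Finset (Finset V)) (F₀ : Finset V) (Γ₁ Γ₂ : List (Finset V))
      (Fk S : Finset V) (x₀ y x₀' : V) (ℓ : ℕ∞)
      (hdim : ∀ F ∈ C, 2 ≤ F.card)
      (hmem : ∀ F ∈ F₀ :: Γ₁, F ∈ C)
      (hdisj : ∀ F ∈ F₀ :: Γ₁, F ∩ S = ∅)
      (hℓ : vdistSets C F₀ S = ℓ)
      (hbefore : ∀ F ∈ F₀ :: Γ₁, ¬ vdistSets C F S < ℓ)
      (hafter : vdistSets C Fk S < ℓ)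
      (hy : y ∈ Fk)
      (hyd : vdistSets C {y} S + 1 = ℓ)
      (hyuniq : ∀ z ∈ Fk, vdistSets C {z} S + 1 = ℓ → z = y)
      (hx₀ : ∀ F ∈ F₀ :: Γ₁, x₀ ∈ F) (hx₀k : x₀ ∈ Fk)
      (hlink : CombSeg (link C x₀)
          (((F₀ :: Γ₁) ++ [Fk]).map (fun F => F.erase x₀))
          ((verts (link C x₀)).filter (fun w => vdistSets C {w} S + 1 = ℓ)) x₀')
      (htail : CombSeg C (Fk :: Γ₂) S y) :
      CombSeg C (F₀ :: Γ₁ ++ Fk :: Γ₂) S x₀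

end MCP

/-! Induction on the dimension. Along the facets anchored at `x` the distance to `S` is that of
`x`; the conservative step into the first facet anchored at `y` keeps `x` but lowers the distance,
so `y` is one step closer to `S` than `x`. If `z ≠ x`, flagness makes `{x, y, z}` a face, so `z`
is adjacent to `y` in the link of `x`. Deleting `x` from these facets, and ordering the last one
conservatively, gives a monotone conservative path in the link towards the vertices one step
closer to `S`: all its facets but the last lie at distance `1` and hence keep a common anchor,
while the last is anchored at `y`, so the induction hypothesis applies. -/

namespace List

variable {α : Type*}

theorem IsChain.and {R S : α → α → Prop} {l : List α} (hR : l.IsChain R) (hS : l.IsChain S) :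
    l.IsChain fun a b => R a b ∧ S a b := by
  induction hR with
  | nil => exact .nil
  | singleton a => exact .singleton a
  | cons_cons hr _ ih =>
    obtain ⟨hs, hS⟩ := isChain_cons_cons.1 hS
    exact .cons_cons ⟨hr, hs⟩ (ih hS)

theorem map_cons_map_tail {x : α} {l : List (List α)} (h : ∀ a ∈ l, a.head? = some x) :
    (l.map tail).map (x :: ·) = l := by
  rw [map_map]
  exact (map_congr_left fun a ha => cons_head?_tail (h a ha)).trans (map_id l)

theorem mem_take_drop_iff {l : List α} {i n : ℕ} {a : α} :
    a ∈ (l.drop i).take n ↔ ∃ j, i ≤ j ∧ j < i + n ∧ l[j]? = some a := by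
  simp only [mem_iff_getElem?, getElem?_take, getElem?_drop]
  constructor
  · rintro ⟨k, hk⟩
    split_ifs at hk with hkn
    exact ⟨i + k, by omega, by omega, hk⟩
  · rintro ⟨j, hij, hjn, hj⟩
    exact ⟨j - i, by rw [if_pos (by omega), Nat.add_sub_cancel' hij, hj]⟩

end List

namespace MCP

variable {V : Type}

lemma one_lt_sup_card {C : Finset (Finset V)} {F : Finset V} (hF : F ∈ C) (h : 1 < F.card) :
    1 < C.sup Finset.card :=
  h.trans_le (Finset.le_sup hF)

section StepIndex

lemma stepIndex_pos {L M : List V} (hhead : L.head? = M.head?) (hne : L ≠ M) :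
    0 < stepIndex L M := by
  rw [Nat.pos_iff_ne_zero, stepIndex, Ne, Nat.sInf_eq_zero, not_or]
  refine ⟨fun h => h (by simpa [List.head?_eq_getElem?] using hhead), fun h => hne ?_⟩
  exact List.ext_getElem? fun k => not_not.1 fun hk => (Set.eq_empty_iff_forall_notMem.1 h k) hk

lemma head?_eq_of_stepIndex_pos {L M : List V} (h : 0 < stepIndex L M) : L.head? = M.head? := by
  by_contra hne
  exact h.ne' (Nat.sInf_eq_zero.2 (Or.inl (by simpa [List.head?_eq_getElem?] using hne)))

lemma stepIndex_cons (x : V) {A B : List V} (h : A ≠ B) :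
    stepIndex (x :: A) (x :: B) = stepIndex A B + 1 := by
  have := Nat.sInf_add (p := fun k => (x :: A)[k]? ≠ (x :: B)[k]?) (n := 1)
    (stepIndex_pos rfl (by simpa using h))
  simpa [stepIndex] using this.symm

end StepIndex

variable [DecidableEq V]

section Complex

variable {C : Finset (Finset V)}

lemma mem_verts {F : Finset V} {v : V} (hF : F ∈ C) (hv : v ∈ F) : v ∈ verts C :=
  Finset.mem_sup.2 ⟨F, hF, hv⟩

lemma mem_link_iff {x : V} {f : Finset V} : f ∈ link C x ↔ ∃ F ∈ C, x ∈ F ∧ F.erase x = f := by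
  simp [link, and_assoc]

lemma erase_mem_link {F : Finset V} {x : V} (hF : F ∈ C) (hx : x ∈ F) : F.erase x ∈ link C x :=
  mem_link_iff.2 ⟨F, hF, hx, rfl⟩

lemma Pure.link {d : ℕ} (h : Pure C (d + 1)) (x : V) : Pure (link C x) d := by
  intro f hf
  obtain ⟨F, hF, hx, rfl⟩ := mem_link_iff.1 hf
  rw [Finset.card_erase_of_mem hx, h F hF, Nat.add_sub_cancel]

lemma IsOrderedFacet.length_eq {d : ℕ} (hC : Pure C d) {L : List V} (hL : IsOrderedFacet C L) :
    L.length = d := by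
  rw [← List.toFinset_card_of_nodup hL.1, hC _ hL.2]

lemma Flag.link {x : V} (h : Flag C) (hx : x ∈ verts C) : Flag (link C x) := by
  intro T hT hadj
  have hTx : ∀ u ∈ T, u ≠ x ∧ (skeleton C).Adj u x := by
    intro u hu
    obtain ⟨f, hf, huf⟩ := Finset.mem_sup.1 (hT hu)
    obtain ⟨F, hF, hxF, rfl⟩ := mem_link_iff.1 hf
    exact ⟨Finset.ne_of_mem_erase huf, Finset.ne_of_mem_erase huf, F, hF,
      Finset.mem_of_mem_erase huf, hxF⟩
  have hclique : ∀ u ∈ insert x T, ∀ v ∈ insert x T, u ≠ v → (skeleton C).Adj u v := by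
    have hlift : ∀ u ∈ T, ∀ v ∈ T, u ≠ v → (skeleton C).Adj u v := by
      intro u hu v hv huv
      obtain ⟨-, f, hf, huf, hvf⟩ := hadj u hu v hv huv
      obtain ⟨F, hF, -, rfl⟩ := mem_link_iff.1 hf
      exact ⟨huv, F, hF, Finset.mem_of_mem_erase huf, Finset.mem_of_mem_erase hvf⟩
    simp only [Finset.mem_insert]
    rintro u (rfl | hu) v (rfl | hv) huv
    exacts [absurd rfl huv, ((hTx v hv).2).symm, (hTx u hu).2, hlift u hu v hv huv]
  have hsub : insert x T ⊆ verts C := by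
    refine Finset.insert_subset hx fun u hu => ?_
    obtain ⟨-, -, F, hF, huF, -⟩ := hTx u hu
    exact mem_verts hF huF
  obtain ⟨G, hG, hTG⟩ := h _ hsub hclique
  refine ⟨G.erase x, erase_mem_link hG (hTG (Finset.mem_insert_self x T)), fun u hu => ?_⟩
  exact Finset.mem_erase.2 ⟨(hTx u hu).1, hTG (Finset.mem_insert_of_mem hu)⟩

lemma Flag.exists_facet_of_triangle (h : Flag C) {x y z : V} (hxy : (skeleton C).Adj x y)
    (hxz : (skeleton C).Adj x z) (hyz : (skeleton C).Adj y z) :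
    ∃ H ∈ C, x ∈ H ∧ y ∈ H ∧ z ∈ H := by
  have hsub : ({x, y, z} : Finset V) ⊆ verts C := by
    obtain ⟨-, F, hF, hxF, hyF⟩ := hxy
    obtain ⟨-, G, hG, -, hzG⟩ := hxz
    simp only [Finset.insert_subset_iff, Finset.singleton_subset_iff]
    exact ⟨mem_verts hF hxF, mem_verts hF hyF, mem_verts hG hzG⟩
  obtain ⟨H, hH, hsubH⟩ := h _ hsub (by
    simp only [Finset.mem_insert, Finset.mem_singleton]
    rintro u (rfl | rfl | rfl) v (rfl | rfl | rfl) huv <;>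
      first | exact absurd rfl huv | assumption | exact SimpleGraph.Adj.symm ‹_›)
  simp only [Finset.insert_subset_iff, Finset.singleton_subset_iff] at hsubH
  exact ⟨H, hH, hsubH⟩

end Complex

section Distance

variable {C : Finset (Finset V)}

lemma vdistSets_of_one_lt (hC : 1 < C.sup Finset.card) (S T : Finset V) :
    vdistSets C S T = ⨅ u ∈ S, ⨅ v ∈ T, (skeleton C).edist u v :=
  if_neg hC.not_ge

lemma vdistSets_singleton (hC : 1 < C.sup Finset.card) (u : V) (T : Finset V) :
    vdistSets C {u} T = ⨅ v ∈ T, (skeleton C).edist u v := by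
  simp [vdistSets_of_one_lt hC]

lemma vdistSets_le_singleton (hC : 1 < C.sup Finset.card) {F T : Finset V} {u : V}
    (hu : u ∈ F) : vdistSets C F T ≤ vdistSets C {u} T := by
  rw [vdistSets_of_one_lt hC, vdistSets_singleton hC]
  exact iInf₂_le u hu

lemma vdistSets_singleton_le_edist (hC : 1 < C.sup Finset.card) {T : Finset V} {u v : V}
    (hv : v ∈ T) : vdistSets C {u} T ≤ (skeleton C).edist u v := by
  rw [vdistSets_singleton hC]
  exact iInf₂_le v hv

lemma one_le_vdistSets (hC : 1 < C.sup Finset.card) {F T : Finset V} (h : Disjoint F T) :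
    1 ≤ vdistSets C F T := by
  rw [vdistSets_of_one_lt hC]
  refine le_iInf₂ fun u hu => le_iInf₂ fun v hv => ?_
  rw [Order.one_le_iff_ne_zero, Ne, SimpleGraph.edist_eq_zero_iff]
  exact fun huv => Finset.disjoint_left.1 h hu (huv ▸ hv)

lemma vdistSets_eq_zero (hC : 1 < C.sup Finset.card) {F T : Finset V} {u : V} (huF : u ∈ F)
    (huT : u ∈ T) : vdistSets C F T = 0 :=
  nonpos_iff_eq_zero.1 <| (vdistSets_le_singleton hC huF).trans <|
    (vdistSets_singleton_le_edist hC huT).trans_eq SimpleGraph.edist_self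

lemma vdistSets_singleton_le_one (hC : 1 < C.sup Finset.card) {T : Finset V} {u v : V}
    (huv : (skeleton C).Adj u v) (hv : v ∈ T) : vdistSets C {u} T ≤ 1 :=
  (vdistSets_singleton_le_edist hC hv).trans_eq (SimpleGraph.edist_eq_one_iff_adj.2 huv)

lemma vdistSets_singleton_le_add_one (hC : 1 < C.sup Finset.card) {T : Finset V} {u v : V}
    (huv : (skeleton C).Adj u v) : vdistSets C {u} T ≤ vdistSets C {v} T + 1 := by
  rw [vdistSets_singleton hC, vdistSets_singleton hC, ENat.iInf_add]
  refine le_iInf fun w => ?_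
  rw [ENat.iInf_add]
  refine le_iInf fun hw => (iInf₂_le w hw).trans ?_
  calc (skeleton C).edist u w ≤ (skeleton C).edist u v + (skeleton C).edist v w :=
        SimpleGraph.edist_triangle
    _ = (skeleton C).edist v w + 1 := by rw [SimpleGraph.edist_eq_one_iff_adj.2 huv, add_comm]

lemma exists_vdistSets_singleton_eq (C : Finset (Finset V)) (T : Finset V) {F : Finset V}
    (hF : F.Nonempty) : ∃ u ∈ F, vdistSets C {u} T = vdistSets C F T := by
  by_cases hC : C.sup Finset.card ≤ 1
  · simp only [vdistSets, if_pos hC]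
    by_cases hFT : (F ∩ T).Nonempty
    · have ⟨u, hu⟩ := hFT
      have huT : ({u} ∩ T).Nonempty := ⟨u, by simpa using (Finset.mem_inter.1 hu).2⟩
      exact ⟨u, (Finset.mem_inter.1 hu).1, by simp [hF, huT, hFT]⟩
    · have ⟨u, hu⟩ := hF
      have huT : ¬ ({u} ∩ T).Nonempty := fun ⟨w, hw⟩ => hFT ⟨w, by
        obtain ⟨rfl, hwT⟩ := by simpa using hw
        exact Finset.mem_inter.2 ⟨hu, hwT⟩⟩
      exact ⟨u, hu, by simp [huT, hFT, hF]⟩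
  · obtain ⟨u, hu, hmin⟩ := F.exists_min_image (fun u => vdistSets C {u} T) hF
    refine ⟨u, hu, le_antisymm ?_ (vdistSets_le_singleton (not_le.1 hC) hu)⟩
    rw [vdistSets_of_one_lt (not_le.1 hC) F T]
    exact le_iInf₂ fun w hw => (hmin w hw).trans_eq (vdistSets_singleton (not_le.1 hC) w T)

end Distance

section Orderings

variable {C : Finset (Finset V)}

lemma admissible_cons {T F : Finset V} {v : V} {A : List V} (hv : v ∈ F)
    (hreal : vdistSets C {v} T = vdistSets C F T) (hA : A.Nodup) (hAF : A.toFinset = F.erase v)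
    (hadm : Admissible (link C v) A (targetSet C v T)) :
    (v :: A).Nodup ∧ (v :: A).toFinset = F ∧ Admissible C (v :: A) T := by
  have hF : (v :: A).toFinset = F := by rw [List.toFinset_cons, hAF, Finset.insert_erase hv]
  have hvA : v ∉ A := fun h => by simpa [hAF] using List.mem_toFinset.2 h
  exact ⟨List.nodup_cons.2 ⟨hvA, hA⟩, hF, hF ▸ hreal, hadm⟩

lemma exists_admissible (C : Finset (Finset V)) (T F : Finset V) :
    ∃ A : List V, A.Nodup ∧ A.toFinset = F ∧ Admissible C A T := by
  induction F using Finset.strongInduction generalizing C T with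
  | H F ih =>
  rcases F.eq_empty_or_nonempty with rfl | hF
  · exact ⟨[], List.nodup_nil, rfl, trivial⟩
  obtain ⟨v, hv, hreal⟩ := exists_vdistSets_singleton_eq C T hF
  obtain ⟨A, hA, hAF, hadm⟩ := ih _ (Finset.erase_ssubset hv) (link C v) (targetSet C v T)
  exact ⟨v :: A, admissible_cons hv hreal hA hAF hadm⟩

lemma exists_admissible_head {T F : Finset V} {v : V} (hv : v ∈ F)
    (hreal : vdistSets C {v} T = vdistSets C F T) :
    ∃ A : List V, A.Nodup ∧ A.toFinset = F ∧ A.head? = some v ∧ Admissible C A T := by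
  obtain ⟨A, hA, hAF, hadm⟩ := exists_admissible (link C v) (targetSet C v T) (F.erase v)
  obtain ⟨hnd, hF, hadm⟩ := admissible_cons hv hreal hA hAF hadm
  exact ⟨v :: A, hnd, hF, rfl, hadm⟩

lemma exists_perm_admissible_max_stepIndex {T : Finset V} (L₀ : List V) {A₀ : List V}
    (hA₀ : Admissible C A₀ T) :
    ∃ R : List V, R.Perm A₀ ∧ Admissible C R T ∧
      ∀ A : List V, A.Perm R → Admissible C A T → stepIndex L₀ A ≤ stepIndex L₀ R := by
  obtain ⟨R, hR, hmax⟩ := Finset.exists_max_image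
    (A₀.permutations.toFinset.filter fun A => Admissible C A T) (stepIndex L₀)
    ⟨A₀, by simpa using hA₀⟩
  simp only [Finset.mem_filter, List.mem_toFinset, List.mem_permutations] at hR hmax
  exact ⟨R, hR.1, hR.2, fun A hA hAadm => hmax A ⟨hA.trans hR.1, hAadm⟩⟩

end Orderings

section ConservativeStep

variable {C : Finset (Finset V)} {S : Finset V} {L M : List V}

lemma ConservativeStep.toFinset_ne (h : ConservativeStep C S L M) : L.toFinset ≠ M.toFinset := by
  obtain ⟨⟨ℓ, -, hℓ⟩, -⟩ := h
  intro he
  simp [he] at hℓ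

lemma ConservativeStep.head_mem (h : ConservativeStep C S L M) (hL : L.Nodup)
    (hlen : 2 ≤ L.length) {a : V} (ha : L.head? = some a) : a ∈ M.toFinset := by
  obtain ⟨⟨ℓ, hℓ, hsd⟩, -⟩ := h
  obtain ⟨t, rfl⟩ := List.head?_eq_some_iff.1 ha
  obtain ⟨b, t, rfl⟩ := List.exists_cons_of_ne_nil (l := t) (by rintro rfl; simp at hlen)
  have hℓt : ℓ ∈ b :: t := List.mem_of_getLast? (by rwa [List.getLast?_cons_cons] at hℓ)
  have haℓ : a ≠ ℓ := fun e => (List.nodup_cons.1 hL).1 (e ▸ hℓt)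
  by_contra haM
  exact haℓ (Finset.mem_singleton.1 (hsd ▸ Finset.mem_sdiff.2 ⟨by simp, haM⟩))

/-- An admissible reordering of `M` anchored at the anchor `a` of `L` would have positive index,
so the conservative choice keeps the anchor. -/
lemma ConservativeStep.head?_eq (h : ConservativeStep C S L M) (hM : M.Nodup) {a : V}
    (ha : L.head? = some a) (haM : a ∈ M.toFinset)
    (hreal : vdistSets C {a} S = vdistSets C M.toFinset S) : M.head? = some a := by
  obtain ⟨A, hA, hAM, hAa, hAadm⟩ := exists_admissible_head haM hreal
  have hpos : 0 < stepIndex L A :=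
    stepIndex_pos (ha.trans hAa.symm) (by rintro rfl; exact h.toFinset_ne hAM)
  have hperm := List.perm_of_nodup_nodup_toFinset_eq hA hM hAM
  rw [← ha, head?_eq_of_stepIndex_pos (hpos.trans_le (h.2.2 A hperm hAadm))]

lemma exists_getLast?_sdiff_erase {x : V} {a : List V} {F : Finset V}
    (h : ∃ ℓ, (x :: a).getLast? = some ℓ ∧ (x :: a).toFinset \ F = {ℓ}) (hxa : x ∉ a)
    (hxF : x ∈ F) : ∃ ℓ, a.getLast? = some ℓ ∧ a.toFinset \ F.erase x = {ℓ} := by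
  obtain ⟨ℓ, hℓ, hsd⟩ := h
  refine ⟨ℓ, ?_, ?_⟩
  · cases a with
    | nil =>
      obtain ⟨hℓx, hℓF⟩ := Finset.mem_sdiff.1 (hsd ▸ Finset.mem_singleton_self ℓ)
      exact absurd (Finset.mem_singleton.1 hℓx ▸ hxF) hℓF
    | cons b t => rwa [List.getLast?_cons_cons] at hℓ
  · rw [← hsd, List.toFinset_cons, Finset.insert_sdiff_of_mem _ hxF]
    ext u
    simp only [Finset.mem_sdiff, Finset.mem_erase, List.mem_toFinset]
    exact and_congr_right fun hu => by simp [ne_of_mem_of_not_mem hu hxa]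

lemma ConservativeStep.tail {x : V} {a b : List V} (h : ConservativeStep C S (x :: a) (x :: b))
    (hxa : x ∉ a) (hxb : x ∉ b) : ConservativeStep (link C x) (targetSet C x S) a b := by
  have hab : a.toFinset ≠ b.toFinset := fun e => h.toFinset_ne (by simp [e])
  obtain ⟨hlast, ⟨hreal, hadm⟩, hmax⟩ := h
  refine ⟨?_, hadm, fun A hA hAadm => ?_⟩
  · simpa [Finset.erase_insert (List.mem_toFinset.not.2 hxb)] using
      exists_getLast?_sdiff_erase hlast hxa (by simp)
  · have hAb := List.toFinset_eq_of_perm _ _ hA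
    have hxA : Admissible C (x :: A) S :=
      ⟨by rwa [List.toFinset_eq_of_perm _ _ (hA.cons x)], hAadm⟩
    have hmaxA := hmax (x :: A) (hA.cons x) hxA
    rwa [stepIndex_cons x (fun e => hab (by rw [e, hAb])),
      stepIndex_cons x (fun e => hab (congrArg _ e)), Nat.add_le_add_iff_right] at hmaxA

end ConservativeStep

section Paths

variable {C : Finset (Finset V)} {S : Finset V}

/-- The conditions of `MonoConsPath` on a single step, bundled so that paths can be cut, projected
to links and extended one step at a time. -/
structure MonoConsStep (C : Finset (Finset V)) (S : Finset V) (L M : List V) : Prop where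
  left : IsOrderedFacet C L
  right : IsOrderedFacet C M
  admissible : Admissible C L S
  adj : AdjFacets L.toFinset M.toFinset
  lex : List.Lex (· < ·) (distVector C M S) (distVector C L S)
  conservative : ConservativeStep C S L M

lemma MonoConsPath.isOrderedFacet {Γ : List (List V)} (h : MonoConsPath C S Γ) {L : List V}
    (hL : L ∈ Γ) : IsOrderedFacet C L :=
  h.1.1 L hL

lemma MonoConsPath.admissible {Γ : List (List V)} (h : MonoConsPath C S Γ) {L : List V}
    (hL : L ∈ Γ) : Admissible C L S := by
  obtain _ | ⟨F, Γ⟩ := Γ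
  · simp at hL
  rcases List.mem_cons.1 hL with rfl | hL
  · exact h.2.2.1 L rfl
  · exact h.2.2.2.cons_induction (Admissible C · S) _ (fun _ _ hs _ => hs.2.1)
      (h.2.2.1 F rfl) L hL

lemma MonoConsPath.isChain {Γ : List (List V)} (h : MonoConsPath C S Γ) :
    Γ.IsChain (MonoConsStep C S) :=
  (h.1.2.and (h.2.1.and h.2.2.2)).imp_of_mem_imp fun _ _ hL hM hLM =>
    ⟨h.isOrderedFacet hL, h.isOrderedFacet hM, h.admissible hL, hLM.1, hLM.2.1, hLM.2.2⟩

lemma monoConsPath_of_isChain {Γ : List (List V)}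
    (hhead : ∀ L ∈ Γ.head?, IsOrderedFacet C L ∧ Admissible C L S)
    (h : Γ.IsChain (MonoConsStep C S)) : MonoConsPath C S Γ := by
  refine ⟨⟨?_, h.imp fun _ _ hs => hs.adj⟩, h.imp fun _ _ hs => hs.lex,
    fun L hL => (hhead L hL).2, h.imp fun _ _ hs => hs.conservative⟩
  obtain _ | ⟨F, Γ⟩ := Γ
  · simp
  intro L hL
  rcases List.mem_cons.1 hL with rfl | hL
  · exact (hhead L rfl).1
  · exact h.cons_induction (IsOrderedFacet C) _ (fun _ _ hs _ => hs.right) (hhead F rfl).1 L hL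

lemma MonoConsPath.infix {Γ Γ' : List (List V)} (h : MonoConsPath C S Γ) (hΓ : Γ' <:+: Γ) :
    MonoConsPath C S Γ' := by
  refine monoConsPath_of_isChain (fun L hL => ?_) (h.isChain.infix hΓ)
  have hL : L ∈ Γ := hΓ.subset (List.mem_of_mem_head? hL)
  exact ⟨h.isOrderedFacet hL, h.admissible hL⟩

lemma MonoConsPath.monoConsStep_of_append {Γ : List (List V)} {a L : List V}
    (h : MonoConsPath C S (Γ ++ [L])) (ha : a ∈ Γ.getLast?) : MonoConsStep C S a L :=
  (List.isChain_append.1 h.isChain).2.2 a ha L rfl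

lemma MonoConsPath.append_singleton {Γ : List (List V)} {a R : List V} (h : MonoConsPath C S Γ)
    (ha : a ∈ Γ.getLast?) (hstep : MonoConsStep C S a R) : MonoConsPath C S (Γ ++ [R]) := by
  refine monoConsPath_of_isChain (fun L hL => ?_) (h.isChain.append (.singleton R) ?_)
  · obtain _ | ⟨F, Γ⟩ := Γ
    · simp at ha
    obtain rfl : F = L := Option.some_inj.1 hL
    exact ⟨h.isOrderedFacet List.mem_cons_self, h.admissible List.mem_cons_self⟩
  · rintro b hb c hc
    obtain rfl : R = c := Option.some_inj.1 hc
    exact (Option.some_inj.1 (hb.symm.trans ha)) ▸ hstep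

lemma IsOrderedFacet.tail {x : V} {a : List V} (h : IsOrderedFacet C (x :: a)) :
    IsOrderedFacet (link C x) a := by
  have hxa := (List.nodup_cons.1 h.1).1
  refine ⟨(List.nodup_cons.1 h.1).2, ?_⟩
  simpa [Finset.erase_insert (List.mem_toFinset.not.2 hxa)] using
    erase_mem_link h.2 (List.mem_toFinset.2 List.mem_cons_self)

lemma AdjFacets.of_insert {s t : Finset V} {x : V} (h : AdjFacets (insert x s) (insert x t))
    (hs : x ∉ s) (ht : x ∉ t) : AdjFacets s t := by
  obtain ⟨hne, hcard, hinter⟩ := h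
  refine ⟨fun e => hne (e ▸ rfl), ?_, ?_⟩
  · rwa [Finset.card_insert_of_notMem hs, Finset.card_insert_of_notMem ht,
      Nat.add_right_cancel_iff] at hcard
  · rwa [← Finset.insert_inter_distrib, Finset.card_insert_of_notMem (by simp [hs]),
      Finset.card_insert_of_notMem hs, Nat.add_right_cancel_iff] at hinter

lemma MonoConsStep.tail {x : V} {a b : List V} (h : MonoConsStep C S (x :: a) (x :: b)) :
    MonoConsStep (link C x) (targetSet C x S) a b := by
  obtain ⟨ha, hb, hadm, hadj, hlex, hcons⟩ := h
  have hxa := (List.nodup_cons.1 ha.1).1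
  have hxb := (List.nodup_cons.1 hb.1).1
  refine ⟨ha.tail, hb.tail, hadm.2, ?_, List.lex_cons_iff.1 hlex, hcons.tail hxa hxb⟩
  simp only [List.toFinset_cons] at hadj
  exact hadj.of_insert (by simpa using hxa) (by simpa using hxb)

lemma MonoConsPath.map_tail {x : V} {Q : List (List V)} (h : MonoConsPath C S (Q.map (x :: ·))) :
    MonoConsPath (link C x) (targetSet C x S) Q := by
  refine monoConsPath_of_isChain (fun a ha => ?_)
    (((List.isChain_map _).1 h.isChain).imp fun _ _ hs => hs.tail)
  obtain _ | ⟨a', Q⟩ := Q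
  · simp at ha
  obtain rfl : a' = a := Option.some_inj.1 ha
  exact ⟨(h.isOrderedFacet List.mem_cons_self).tail, (h.admissible List.mem_cons_self).2⟩

end Paths

section Anchors

variable {C : Finset (Finset V)} {S : Finset V}

lemma Admissible.vdistSets_head {L : List V} (h : Admissible C L S) {a : V}
    (ha : L.head? = some a) : vdistSets C {a} S = vdistSets C L.toFinset S := by
  obtain ⟨t, rfl⟩ := List.head?_eq_some_iff.1 ha
  exact h.1

lemma Admissible.head?_eq (hC : 1 < C.sup Finset.card) {R : List V} (h : Admissible C R S)
    {y : V} (hy : y ∈ R.toFinset) (hyS : y ∈ S) (huniq : ∀ u ∈ R.toFinset, u ∈ S → u = y) :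
    R.head? = some y := by
  obtain _ | ⟨r, t⟩ := R
  · simp at hy
  have hr : vdistSets C {r} S = 0 := h.1.trans (vdistSets_eq_zero hC hy hyS)
  have hrS : r ∈ S := by
    by_contra hrS
    have := one_le_vdistSets (C := C) hC (Finset.disjoint_singleton_left.2 hrS)
    simp [hr] at this
  rw [List.head?_cons, huniq r (by simp) hrS]

lemma MonoConsStep.vdistSets_le {L M : List V} (h : MonoConsStep C S L M) :
    vdistSets C M.toFinset S ≤ vdistSets C L.toFinset S := by
  obtain ⟨-, -, hL, ⟨-, hcard, hinter⟩, hlex, -, hM, -⟩ := h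
  obtain _ | ⟨b, M⟩ := M
  · rw [hcard] at hinter
    simp at hinter
  obtain _ | ⟨a, L⟩ := L
  · exact absurd hlex List.not_lex_nil
  rw [← hL.1, ← hM.1]
  rcases List.cons_lex_cons_iff.1 hlex with hlt | ⟨heq, -⟩
  exacts [hlt.le, heq.le]

lemma MonoConsPath.vdistSets_le_head {F : List V} {Γ : List (List V)}
    (h : MonoConsPath C S (F :: Γ)) {G : List V} (hG : G ∈ F :: Γ) :
    vdistSets C G.toFinset S ≤ vdistSets C F.toFinset S := by
  rcases List.mem_cons.1 hG with rfl | hG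
  · exact le_rfl
  · exact h.isChain.cons_induction
      (fun G : List V => vdistSets C G.toFinset S ≤ vdistSets C F.toFinset S) _
      (fun _ _ hs hle => hs.vdistSets_le.trans hle) le_rfl G hG

lemma MonoConsPath.vdistSets_eq_one (hC : 1 < C.sup Finset.card) {F : List V}
    {Γ : List (List V)} (h : MonoConsPath C S (F :: Γ))
    (hdisj : ∀ G ∈ F :: Γ, Disjoint G.toFinset S) {y z : V} (hz : z ∈ F.toFinset)
    (hzy : (skeleton C).Adj z y) (hy : y ∈ S) :
    ∀ G ∈ F :: Γ, vdistSets C G.toFinset S = 1 := fun G hG =>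
  le_antisymm ((h.vdistSets_le_head hG).trans <| (vdistSets_le_singleton hC hz).trans <|
    vdistSets_singleton_le_one hC hzy hy) (one_le_vdistSets hC (hdisj G hG))

lemma MonoConsPath.head?_eq_head {F : List V} {Γ : List (List V)}
    (h : MonoConsPath C S (F :: Γ)) (hlen : ∀ G ∈ F :: Γ, 2 ≤ G.length)
    (hvd : ∀ G ∈ F :: Γ, vdistSets C G.toFinset S = vdistSets C F.toFinset S) {a : V}
    (ha : F.head? = some a) : ∀ G ∈ F :: Γ, G.head? = some a := by
  intro G hG
  rcases List.mem_cons.1 hG with rfl | hG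
  · exact ha
  refine (List.IsChain.iff_mem.1 h.isChain).cons_induction (fun G : List V => G.head? = some a)
    _ ?_ ha G hG
  rintro L M ⟨hL, hM, hs⟩ hLa
  have haM := hs.conservative.head_mem hs.left.1 (hlen L hL) hLa
  refine hs.conservative.head?_eq hs.right.1 hLa haM ?_
  rw [hs.admissible.vdistSets_head hLa, hvd L hL, hvd M hM]

lemma vdistSets_add_one_eq_of_lt (hC : 1 < C.sup Finset.card) {x y : V}
    (hxy : (skeleton C).Adj x y) (h : vdistSets C {y} S < vdistSets C {x} S) :
    vdistSets C {y} S + 1 = vdistSets C {x} S :=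
  le_antisymm ((ENat.add_one_le_iff h.ne_top).2 h) (vdistSets_singleton_le_add_one hC hxy)

lemma notMem_verts_link (x : V) : x ∉ verts (link C x) := by
  simp [verts, link]

lemma targetSet_subset_verts_link (x : V) : targetSet C x S ⊆ verts (link C x) := by
  unfold targetSet
  split_ifs
  exacts [Finset.inter_subset_right, Finset.filter_subset _ _]

lemma mem_targetSet {x : V} (hx : x ∉ S) {w : V} :
    w ∈ targetSet C x S ↔ w ∈ verts (link C x) ∧ vdistSets C {w} S + 1 = vdistSets C {x} S := by
  simp [targetSet, hx]

lemma disjoint_targetSet (hC : 1 < C.sup Finset.card) {x : V} (hx : x ∉ S)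
    (hxtop : vdistSets C {x} S ≠ ⊤) {F : Finset V}
    (hF : vdistSets C F S = vdistSets C {x} S) : Disjoint F (targetSet C x S) := by
  refine Finset.disjoint_right.2 fun u hu huF => ?_
  have hux := ((mem_targetSet hx).1 hu).2
  have hutop : vdistSets C {u} S ≠ ⊤ := fun e => hxtop (by rw [← hux, e, top_add])
  have hle := vdistSets_le_singleton (T := S) hC huF
  rw [hF, ← hux] at hle
  exact lt_irrefl _ ((ENat.add_one_le_iff hutop).1 hle)

lemma MonoConsStep.anchor_change (hC : 1 < C.sup Finset.card) {a L : List V}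
    (h : MonoConsStep C S a L) (hlen : 2 ≤ a.length) {x y : V} (hx : a.head? = some x)
    (hy : L.head? = some y) (hxy : x ≠ y) :
    x ∈ L.toFinset ∧ x ∉ S ∧ vdistSets C {x} S ≠ ⊤ ∧ y ∈ targetSet C x S := by
  have hxL := h.conservative.head_mem h.left.1 hlen hx
  have hyL : y ∈ L.toFinset := List.mem_toFinset.2 (List.mem_of_mem_head? hy)
  have hlt : vdistSets C {y} S < vdistSets C {x} S := by
    rw [h.conservative.2.1.vdistSets_head hy]
    refine lt_of_le_of_ne (vdistSets_le_singleton hC hxL) fun e => hxy ?_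
    exact Option.some_inj.1 ((h.conservative.head?_eq h.right.1 hx hxL e.symm).symm.trans hy)
  have hyx := vdistSets_add_one_eq_of_lt hC ⟨hxy, L.toFinset, h.right.2, hxL, hyL⟩ hlt
  have hxS : x ∉ S := fun hxS =>
    not_lt_zero (vdistSets_eq_zero hC (Finset.mem_singleton_self x) hxS ▸ hlt)
  refine ⟨hxL, hxS, hyx ▸ WithTop.add_ne_top.2 ⟨hlt.ne_top, ENat.one_ne_top⟩,
    (mem_targetSet hxS).2 ⟨?_, hyx⟩⟩
  exact mem_verts (erase_mem_link h.right.2 hxL) (Finset.mem_erase.2 ⟨hxy.symm, hyL⟩)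

lemma MonoConsPath.anchor_mem_last {d : ℕ} (hpure : Pure C d) (hd : 2 ≤ d) {Γ : List (List V)}
    {L : List V} {x : V} (h : MonoConsPath C S (Γ ++ [L])) (hΓ : Γ ≠ [])
    (hx : ∀ F ∈ Γ, F.head? = some x) : x ∈ L.toFinset := by
  obtain ⟨a, ha⟩ := Option.isSome_iff_exists.1 (List.getLast?_isSome.2 hΓ)
  have hstep := h.monoConsStep_of_append ha
  exact hstep.conservative.head_mem hstep.left.1 (hstep.left.length_eq hpure ▸ hd)
    (hx a (List.mem_of_getLast? ha))

end Anchors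

section Projection

variable {C : Finset (Finset V)} {S : Finset V}

lemma MonoConsStep.exists_link_step {x y : V} {t L : List V}
    (hCx : 1 < (link C x).sup Finset.card) (h : MonoConsStep C S (x :: t) L)
    (hxL : x ∈ L.toFinset) (hdisj : Disjoint t.toFinset (targetSet C x S))
    (hyL : y ∈ L.toFinset) (hyT : y ∈ targetSet C x S) :
    ∃ R : List V, R.toFinset = L.toFinset.erase x ∧ R.head? = some y ∧
      MonoConsStep (link C x) (targetSet C x S) t R := by
  set T := targetSet C x S
  obtain ⟨ht, hL, hadm, hadj, -, hcons⟩ := h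
  have hxt : x ∉ t := (List.nodup_cons.1 ht.1).1
  have hTx : ∀ u ∈ T, u ≠ x := fun u hu e =>
    notMem_verts_link x (e ▸ targetSet_subset_verts_link x hu)
  -- `T` misses `x :: t`, and `L` has a single vertex outside `x :: t`.
  have hnew : ∀ u ∈ L.toFinset, u ∈ T → u = y := by
    have hsd : ∀ w ∈ L.toFinset, w ∈ T → w ∈ L.toFinset \ (x :: t).toFinset := fun w hw hwT =>
      Finset.mem_sdiff.2 ⟨hw, by simpa [hTx w hwT] using Finset.disjoint_right.1 hdisj hwT⟩
    have hcard : (L.toFinset \ (x :: t).toFinset).card = 1 := by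
      have := Finset.card_sdiff_add_card_inter L.toFinset (x :: t).toFinset
      rw [Finset.inter_comm] at this
      obtain ⟨-, hcard, hinter⟩ := hadj
      omega
    exact fun u hu huT => Finset.card_le_one.1 hcard.le _ (hsd u hu huT) _ (hsd y hyL hyT)
  obtain ⟨A₀, hA₀, hA₀L, hA₀adm⟩ := exists_admissible (link C x) T (L.toFinset.erase x)
  obtain ⟨R, hRA₀, hR, hRmax⟩ := exists_perm_admissible_max_stepIndex t hA₀adm
  have hRL : R.toFinset = L.toFinset.erase x := (List.toFinset_eq_of_perm _ _ hRA₀).trans hA₀L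
  have hRy : R.head? = some y :=
    hR.head?_eq hCx (hRL ▸ Finset.mem_erase.2 ⟨hTx y hyT, hyL⟩) hyT fun u hu huT =>
      hnew u (Finset.mem_of_mem_erase (hRL ▸ hu)) huT
  have hlast := exists_getLast?_sdiff_erase hcons.1 hxt hxL
  refine ⟨R, hRL, hRy, ht.tail, ⟨hRA₀.nodup_iff.2 hA₀, hRL ▸ erase_mem_link hL.2 hxL⟩, hadm.2,
    ?_, ?_, by simpa [hRL] using hlast, hR, hRmax⟩
  · rw [List.toFinset_cons, ← Finset.insert_erase hxL, ← hRL] at hadj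
    exact hadj.of_insert (by simpa using hxt) (by simp [hRL])
  · obtain ⟨ℓ, hℓ, -⟩ := hlast
    obtain ⟨t₀, t, rfl⟩ := List.exists_cons_of_ne_nil (l := t) (by rintro rfl; simp at hℓ)
    obtain ⟨R, rfl⟩ := List.head?_eq_some_iff.1 hRy
    refine List.Lex.rel ?_
    rw [vdistSets_eq_zero hCx (Finset.mem_singleton_self y) hyT, hadm.2.1]
    exact zero_lt_one.trans_le (one_le_vdistSets hCx hdisj)

lemma MonoConsPath.exists_anchor {d : ℕ} (hpure : Pure C d) (hd : 2 ≤ d)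
    (hC : 1 < C.sup Finset.card) {t₀ : List V} {Q : List (List V)}
    (h : MonoConsPath C S (t₀ :: Q)) (hdisj : ∀ t ∈ t₀ :: Q, Disjoint t.toFinset S) {y z : V}
    (hz : z ∈ t₀.toFinset) (hzy : (skeleton C).Adj z y) (hy : y ∈ S) :
    ∃ x', x' ∉ S ∧ ∀ t ∈ t₀ :: Q, t.head? = some x' := by
  have hone := h.vdistSets_eq_one hC hdisj hz hzy hy
  have hlen : ∀ t ∈ t₀ :: Q, 2 ≤ t.length := fun t ht =>
    (h.isOrderedFacet ht).length_eq hpure ▸ hd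
  obtain ⟨x', hx'⟩ := Option.isSome_iff_exists.1 (List.isSome_head?.2
    (List.ne_nil_of_length_pos (l := t₀) (by have := hlen t₀ List.mem_cons_self; omega)))
  refine ⟨x', fun hx'S => ?_, h.head?_eq_head hlen
    (fun t ht => (hone t ht).trans (hone _ List.mem_cons_self).symm) hx'⟩
  have := (h.admissible List.mem_cons_self).vdistSets_head hx'
  rw [hone _ List.mem_cons_self, vdistSets_eq_zero hC (Finset.mem_singleton_self _) hx'S] at this
  exact zero_ne_one this

lemma MonoConsPath.exists_link {d : ℕ} (hpure : Pure C (d + 1)) {F₀ L : List V}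
    {P : List (List V)} {x y z : V} (h : MonoConsPath C S (F₀ :: P ++ [L]))
    (hx : ∀ F ∈ F₀ :: P, F.head? = some x) (hy : L.head? = some y) (hxy : x ≠ y)
    (hz : z ∈ F₀.tail.toFinset) (hzy : (skeleton (link C x)).Adj z y) :
    ∃ x' R, x' ≠ y ∧ R.toFinset = L.toFinset.erase x ∧ R.head? = some y ∧
      (∀ t ∈ F₀.tail :: P.map List.tail, t.head? = some x') ∧
      MonoConsPath (link C x) (targetSet C x S) (F₀.tail :: P.map List.tail ++ [R]) := by
  set T := targetSet C x S
  obtain ⟨hzy', G, hG, hzG, hyG⟩ := hzy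
  obtain ⟨H, hH, hxH, rfl⟩ := mem_link_iff.1 hG
  have hG2 : 2 ≤ (H.erase x).card := Finset.one_lt_card.2 ⟨z, hzG, y, hyG, hzy'⟩
  have hd : 2 ≤ d := by rwa [hpure.link x _ hG] at hG2
  have hC : 1 < C.sup Finset.card := one_lt_sup_card hH (by rw [hpure H hH]; omega)
  have hCx : 1 < (link C x).sup Finset.card := one_lt_sup_card hG hG2
  obtain ⟨a, ha⟩ := Option.isSome_iff_exists.1 (List.getLast?_isSome.2 (List.cons_ne_nil F₀ P))
  have haΓ : a ∈ F₀ :: P := List.mem_of_getLast? ha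
  have hstep := h.monoConsStep_of_append ha
  obtain ⟨hxL, hxS, hxtop, hyT⟩ := hstep.anchor_change hC
    (by rw [hstep.left.length_eq hpure]; omega) (hx a haΓ) hy hxy
  have hΓ₀ : MonoConsPath C S (F₀ :: P) := h.infix (List.prefix_append _ _).isInfix
  have hdisj : ∀ F ∈ F₀ :: P, Disjoint F.tail.toFinset T := fun F hF =>
    (disjoint_targetSet hC hxS hxtop ((hΓ₀.admissible hF).vdistSets_head (hx F hF)).symm).mono_left
      fun u hu => List.mem_toFinset.2 (List.mem_of_mem_tail (List.mem_toFinset.1 hu))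
  have hQ : MonoConsPath (link C x) T (F₀.tail :: P.map List.tail) :=
    MonoConsPath.map_tail (by rwa [← List.map_cons, List.map_cons_map_tail hx])
  obtain ⟨x', hx'T, hx'⟩ := hQ.exists_anchor (hpure.link x) hd hCx (by simpa using hdisj) hz
    ⟨hzy', _, hG, hzG, hyG⟩ hyT
  rw [← List.cons_head?_tail (hx a haΓ)] at hstep
  obtain ⟨R, hRL, hRy, hstepR⟩ := hstep.exists_link_step hCx hxL (hdisj a haΓ)
    (List.mem_toFinset.2 (List.mem_of_mem_head? hy)) hyT
  refine ⟨x', R, fun e => hx'T (e ▸ hyT), hRL, hRy, hx', hQ.append_singleton ?_ hstepR⟩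
  rw [← List.map_cons, List.getLast?_map, ha]
  rfl

end Projection

theorem mem_of_consecutive_anchors {d : ℕ} : ∀ {C : Finset (Finset V)}, Pure C d → MCP.Flag C →
    ∀ {S : Finset V} {F₀ L : List V} {P : List (List V)} {x y z : V},
    MonoConsPath C S (F₀ :: P ++ [L]) → (∀ F ∈ F₀ :: P, F.head? = some x) → L.head? = some y →
    x ≠ y → z ∈ F₀.toFinset → (skeleton C).Adj z y → ∀ F ∈ F₀ :: P ++ [L], z ∈ F.toFinset := by
  induction d with
  | zero =>
    rintro C hpure - S F₀ L P x y z - - - - - ⟨-, H, hH, hzH, -⟩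
    exact absurd (hpure H hH) (Finset.card_ne_zero.2 ⟨z, hzH⟩)
  | succ d ih =>
  intro C hpure hflag S F₀ L P x y z h hx hy hxy hz hzy F hF
  have hd : 2 ≤ d + 1 := by
    obtain ⟨hzy', H, hH, hzH, hyH⟩ := hzy
    rw [← hpure H hH]
    exact Finset.one_lt_card.2 ⟨z, hzH, y, hyH, hzy'⟩
  have hxL := h.anchor_mem_last hpure hd (List.cons_ne_nil F₀ P) hx
  have hmem : ∀ {G : List V} {v : V}, G.head? = some v → v ∈ G.toFinset :=
    fun hv => List.mem_toFinset.2 (List.mem_of_mem_head? hv)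
  by_cases hzx : z = x
  · subst hzx
    rcases List.mem_append.1 hF with hF | hF
    exacts [hmem (hx F hF), List.mem_singleton.1 hF ▸ hxL]
  have hzt : z ∈ F₀.tail.toFinset := by
    rw [← List.cons_head?_tail (hx F₀ List.mem_cons_self)] at hz
    simpa [hzx] using hz
  have hzx' : (skeleton C).Adj z x :=
    ⟨hzx, _, (h.isOrderedFacet List.mem_cons_self).2, hz, hmem (hx F₀ List.mem_cons_self)⟩
  have hxy' : (skeleton C).Adj x y := ⟨hxy, _, (h.isOrderedFacet (by simp)).2, hxL, hmem hy⟩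
  obtain ⟨H, hH, hxH, hyH, hzH⟩ := hflag.exists_facet_of_triangle hxy' hzx'.symm hzy.symm
  have hzyx : (skeleton (link C x)).Adj z y := ⟨hzy.ne, H.erase x, erase_mem_link hH hxH,
    Finset.mem_erase.2 ⟨hzx, hzH⟩, Finset.mem_erase.2 ⟨hxy.symm, hyH⟩⟩
  obtain ⟨x', R, hx'y, hRL, hRy, hx', hΛ⟩ := h.exists_link hpure hx hy hxy hzt hzyx
  have hzΛ := ih (hpure.link x) (hflag.link (mem_verts hH hxH)) hΛ hx' hRy hx'y hzt hzyx
  rcases List.mem_append.1 hF with hF | hF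
  · have := hzΛ F.tail (List.mem_append_left _ (List.mem_map_of_mem (f := List.tail) hF))
    exact List.mem_toFinset.2 (List.mem_of_mem_tail (List.mem_toFinset.1 this))
  · obtain rfl := List.mem_singleton.1 hF
    exact Finset.mem_of_mem_erase (hRL ▸ hzΛ R (by simp))

end MCP

open MCP in
theorem statement8_general {V : Type} [DecidableEq V] (d : ℕ)
    (C : Finset (Finset V)) (hpure : Pure C d) (hflag : MCP.Flag C)
    (S : Finset V)
    (Γ : List (List V)) (hmc : MonoConsPath C S Γ)
    (x y z : V) (i m : ℕ) (him : i < m) (hm : m < Γ.length) (hxy : x ≠ y)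
    (hanchx : ∀ p L, i ≤ p → p < m → Γ[p]? = some L → L.head? = some x)
    (hanchy : ∀ L, Γ[m]? = some L → L.head? = some y)
    (hzy : (skeleton C).Adj z y)
    (hz : ∀ L, Γ[i]? = some L → z ∈ L.toFinset) :
    ∀ j L, i ≤ j → j ≤ m → Γ[j]? = some L → z ∈ L.toFinset := by
  intro j F hij hjm hF
  have hL : Γ[m]? = some Γ[m] := List.getElem?_eq_getElem hm
  set Δ := (Γ.drop i).take (m - i) with hΔ
  have hΔΓ : Δ ++ [Γ[m]] <:+: Γ := by
    have : (Γ.drop i).take (m - i + 1) = Δ ++ [Γ[m]] := by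
      rw [List.take_add_one, List.getElem?_drop, Nat.add_sub_cancel' him.le, hL]
      rfl
    exact this ▸ (List.take_prefix _ _).isInfix.trans (List.drop_suffix _ _).isInfix
  have hmemΔ : ∀ G, G ∈ Δ ↔ ∃ p, i ≤ p ∧ p < m ∧ Γ[p]? = some G := fun G => by
    rw [hΔ, List.mem_take_drop_iff, Nat.add_sub_cancel' him.le]
  obtain ⟨F₀, P, hΔP⟩ := List.exists_cons_of_ne_nil (l := Δ) (by
    rw [← List.length_pos_iff, hΔ, List.length_take, List.length_drop]; omega)
  have hF₀ : Γ[i]? = some F₀ := by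
    have := congrArg List.head? hΔP
    rwa [hΔ, List.head?_take, if_neg (by omega), List.head?_drop] at this
  have key := mem_of_consecutive_anchors hpure hflag (hmc.infix (hΔP ▸ hΔΓ))
    (fun G hG => by obtain ⟨p, hip, hpm, hp⟩ := (hmemΔ G).1 (hΔP ▸ hG); exact hanchx p G hip hpm hp)
    (hanchy _ hL) hxy (hz F₀ hF₀) hzy
  rcases lt_or_eq_of_le hjm with hjm | rfl
  · exact key F (List.mem_append_left _ (hΔP ▸ (hmemΔ F).2 ⟨j, hij, hjm, hF⟩))
  · exact key F (by simp [Option.some_inj.1 (hL.symm.trans hF)])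

open MCP in
/-- Lemma on containment of `z`: in a flag normal complex, if `x` and
`y` are consecutive anchors along a monotone conservative path (the facets at positions
`i ≤ p < m` being anchored at `x` and `F_m` being the first facet anchored at `y`),
and `z` is a neighbor of `y` belonging to the facet at position `i`, then `z` belongs
to every facet at positions `i` through `m`. -/
theorem statement8 {V : Type} [DecidableEq V] [Fintype V] (d : ℕ)
    (C : Finset (Finset V)) (hpure : Pure C d) (hnormal : Normal C) (hflag : MCP.Flag C)
    (S : Finset V) (hS : S.Nonempty) (hSv : S ⊆ verts C)
    (Γ : List (List V)) (hmc : MonoConsPath C S Γ)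
    (x y z : V) (i m : ℕ) (him : i < m) (hm : m < Γ.length) (hxy : x ≠ y)
    (hanchx : ∀ p L, i ≤ p → p < m → Γ[p]? = some L → L.head? = some x)
    (hanchy : ∀ L, Γ[m]? = some L → L.head? = some y)
    (hzy : (skeleton C).Adj z y)
    (hz : ∀ L, Γ[i]? = some L → z ∈ L.toFinset) :
    ∀ j L, i ≤ j → j ≤ m → Γ[j]? = some L → z ∈ L.toFinset :=
  statement8_general d C hpure hflag S Γ hmc x y z i m him hm hxy hanchx hanchy hzy hz
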